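/- arXiv:1907.01437 — 3 statements merged into one kernel-verified Lean document; each statement's English description precedes it below -/
import Mathlib

section
/- Let γ > β > 0 and let h lie in H_γ with weak derivative g and with h(∞) := lim_{x→∞} h(x) = 0. Then ∫₀^∞ |h(x)|² e^{βx} dx ≤ (1/(γ(γ−β))) · ∫₀^∞ |g(t)|² e^{γt} dt; in particular h belongs to the weighted Lebesgue space L²([0,∞), e^{βx} dx) and ‖h‖_{L²_β} ≤ (1/√(γ(γ−β))) ‖h‖_γ. -/
open MeasureTheory Real Filter Set

/-!
Since `h(∞) = 0`, `h(x) = -∫ₓ^∞ g`. Writing `g = (g e^{γt/2}) e^{-γt/2}`, Cauchy–Schwarz gives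
`h(x)² ≤ (e^{-γx}/γ) ∫₀^∞ g² e^{γt}`, so `h² e^{βx}` is dominated by a multiple of `e^{-(γ-β)x}`,
whose integral over `(0, ∞)` is `1/(γ-β)`.
-/

theorem sq_integral_mul_le_integral_sq_mul_integral_sq {α : Type*} [MeasurableSpace α]
    {μ : Measure α} {f k : α → ℝ} (hf : MemLp f 2 μ) (hk : MemLp k 2 μ) :
    (∫ a, f a * k a ∂μ) ^ 2 ≤ (∫ a, f a ^ 2 ∂μ) * ∫ a, k a ^ 2 ∂μ := by
  have holder := integral_mul_norm_le_Lp_mul_Lq (μ := μ) HolderConjugate.two_two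
    (by simpa using hf) (by simpa using hk)
  simp only [norm_eq_abs, rpow_two, sq_abs, ← sqrt_eq_rpow, ← abs_mul] at holder
  have hA : 0 ≤ ∫ a, f a ^ 2 ∂μ := integral_nonneg fun a => sq_nonneg _
  have hB : 0 ≤ ∫ a, k a ^ 2 ∂μ := integral_nonneg fun a => sq_nonneg _
  calc (∫ a, f a * k a ∂μ) ^ 2 = |∫ a, f a * k a ∂μ| ^ 2 := (sq_abs _).symm
    _ ≤ (√(∫ a, f a ^ 2 ∂μ) * √(∫ a, k a ^ 2 ∂μ)) ^ 2 :=
        pow_le_pow_left₀ (abs_nonneg _) (abs_integral_le_integral_abs.trans holder) 2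
    _ = (∫ a, f a ^ 2 ∂μ) * ∫ a, k a ^ 2 ∂μ := by rw [mul_pow, sq_sqrt hA, sq_sqrt hB]

theorem integral_exp_neg_mul_Ioi {γ : ℝ} (hγ : 0 < γ) (a : ℝ) :
    ∫ t in Ioi a, exp (-γ * t) = exp (-γ * a) / γ := by
  rw [integral_exp_mul_Ioi (neg_neg_of_pos hγ), div_neg, neg_div, neg_neg]

theorem integrableOn_Ioi_and_integral_le_of_norm_le_mul_exp {f : ℝ → ℝ} {K δ a : ℝ} (hδ : 0 < δ)
    (hf : AEStronglyMeasurable f (volume.restrict (Ioi a)))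
    (hbound : ∀ x ∈ Ioi a, ‖f x‖ ≤ K * exp (-δ * x)) :
    IntegrableOn f (Ioi a) ∧ ∫ x in Ioi a, f x ≤ K * (exp (-δ * a) / δ) := by
  have hdom : IntegrableOn (fun x => K * exp (-δ * x)) (Ioi a) :=
    (exp_neg_integrableOn_Ioi a hδ).const_mul K
  have hint : IntegrableOn f (Ioi a) :=
    hdom.mono' hf ((ae_restrict_iff' measurableSet_Ioi).2 (ae_of_all _ hbound))
  refine ⟨hint, ?_⟩
  calc ∫ x in Ioi a, f x ≤ ∫ x in Ioi a, K * exp (-δ * x) :=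
        setIntegral_mono_on hint hdom measurableSet_Ioi
          fun x hx => (le_abs_self _).trans (hbound x hx)
    _ = K * (exp (-δ * a) / δ) := by rw [integral_const_mul, integral_exp_neg_mul_Ioi hδ]

section ExpWeight

variable {g : ℝ → ℝ} {γ a : ℝ}

theorem memLp_two_mul_exp_half (hg : AEStronglyMeasurable g (volume.restrict (Ioi a)))
    (hint : IntegrableOn (fun t => g t ^ 2 * exp (γ * t)) (Ioi a)) :
    MemLp (fun t => g t * exp (γ * t / 2)) 2 (volume.restrict (Ioi a)) := by
  refine (memLp_two_iff_integrable_sq (hg.mul (by fun_prop))).2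
    (hint.congr_fun (fun t _ => ?_) measurableSet_Ioi)
  simp only [Pi.mul_apply, mul_pow, exp_half, sq_sqrt (exp_pos _).le]

theorem memLp_two_exp_neg_mul_half (hγ : 0 < γ) :
    MemLp (fun t => exp (-γ * t / 2)) 2 (volume.restrict (Ioi a)) :=
  (memLp_two_iff_integrable_sq (by fun_prop)).2 ((exp_neg_integrableOn_Ioi a hγ).congr_fun
    (fun t _ => by simp only [exp_half, sq_sqrt (exp_pos _).le]) measurableSet_Ioi)

theorem mul_exp_half_mul_exp_neg_half (t : ℝ) :
    g t * exp (γ * t / 2) * exp (-γ * t / 2) = g t := by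
  rw [mul_assoc, ← exp_add, show γ * t / 2 + -γ * t / 2 = 0 by ring, exp_zero, mul_one]

theorem integrableOn_Ioi_of_integrableOn_sq_mul_exp (hγ : 0 < γ)
    (hg : AEStronglyMeasurable g (volume.restrict (Ioi a)))
    (hint : IntegrableOn (fun t => g t ^ 2 * exp (γ * t)) (Ioi a)) :
    IntegrableOn g (Ioi a) := by
  have := (memLp_two_mul_exp_half hg hint).integrable_mul (memLp_two_exp_neg_mul_half hγ)
  simp only [Pi.mul_def, mul_exp_half_mul_exp_neg_half] at this
  exact this

theorem sq_integral_Ioi_le_of_integrableOn_sq_mul_exp (hγ : 0 < γ)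
    (hg : AEStronglyMeasurable g (volume.restrict (Ioi a)))
    (hint : IntegrableOn (fun t => g t ^ 2 * exp (γ * t)) (Ioi a)) {x : ℝ} (hx : a ≤ x) :
    (∫ t in Ioi x, g t) ^ 2 ≤ (∫ t in Ioi a, g t ^ 2 * exp (γ * t)) * (exp (-γ * x) / γ) := by
  have hxa : Ioi x ⊆ Ioi a := Ioi_subset_Ioi hx
  have := sq_integral_mul_le_integral_sq_mul_integral_sq
    (memLp_two_mul_exp_half (hg.mono_set hxa) (hint.mono_set hxa)) (memLp_two_exp_neg_mul_half hγ)
  simp only [mul_exp_half_mul_exp_neg_half] at this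
  simp only [mul_pow, exp_half, sq_sqrt (exp_pos _).le, integral_exp_neg_mul_Ioi hγ] at this
  refine this.trans (mul_le_mul_of_nonneg_right ?_ (by positivity))
  exact setIntegral_mono_set hint (ae_of_all _ fun t => by positivity) hxa.eventuallyLE

end ExpWeight

section DecayAtInfinity

variable {h g : ℝ → ℝ} {a : ℝ}

theorem eq_neg_integral_Ioi_of_tendsto_atTop_zero (hg : IntegrableOn g (Ioi a))
    (hFTC : ∀ y ≥ a, h y = h a + ∫ t in a..y, g t) (hlim : Tendsto h atTop (nhds 0)) {x : ℝ}
    (hx : a ≤ x) :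
    h x = -∫ t in Ioi x, g t := by
  have hlim' : Tendsto h atTop (nhds (h a + ∫ t in Ioi a, g t)) :=
    (tendsto_const_nhds.add (intervalIntegral_tendsto_integral_Ioi a hg tendsto_id)).congr'
      (eventually_atTop.2 ⟨a, fun y hy => (hFTC y hy).symm⟩)
  have ha : h a = -∫ t in Ioi a, g t := eq_neg_of_add_eq_zero_left (tendsto_nhds_unique hlim' hlim)
  rw [hFTC x hx, ha, ← intervalIntegral.integral_Ioi_sub_Ioi hg hx]
  ring

theorem continuousOn_Ici_of_tendsto_atTop_zero (hg : IntegrableOn g (Ioi a))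
    (hFTC : ∀ y ≥ a, h y = h a + ∫ t in a..y, g t) (hlim : Tendsto h atTop (nhds 0)) :
    ContinuousOn h (Ici a) :=
  hg.continuousOn_Ici_primitive_Ioi.neg.congr fun _ hx =>
    eq_neg_integral_Ioi_of_tendsto_atTop_zero hg hFTC hlim hx

theorem sq_le_mul_exp_neg_of_tendsto_atTop_zero {γ : ℝ} (hγ : 0 < γ)
    (hg : AEStronglyMeasurable g (volume.restrict (Ioi a)))
    (hint : IntegrableOn (fun t => g t ^ 2 * exp (γ * t)) (Ioi a))
    (hFTC : ∀ y ≥ a, h y = h a + ∫ t in a..y, g t) (hlim : Tendsto h atTop (nhds 0)) {x : ℝ}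
    (hx : a ≤ x) :
    h x ^ 2 ≤ (∫ t in Ioi a, g t ^ 2 * exp (γ * t)) * (exp (-γ * x) / γ) := by
  rw [eq_neg_integral_Ioi_of_tendsto_atTop_zero
    (integrableOn_Ioi_of_integrableOn_sq_mul_exp hγ hg hint) hFTC hlim hx, neg_sq]
  exact sq_integral_Ioi_le_of_integrableOn_sq_mul_exp hγ hg hint hx

theorem integral_sq_mul_exp_Ioi_le_of_tendsto_atTop_zero {β γ : ℝ} (hγ : 0 < γ) (hβγ : β < γ)
    (hg : AEStronglyMeasurable g (volume.restrict (Ioi a)))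
    (hint : IntegrableOn (fun t => g t ^ 2 * exp (γ * t)) (Ioi a))
    (hFTC : ∀ y ≥ a, h y = h a + ∫ t in a..y, g t) (hlim : Tendsto h atTop (nhds 0)) :
    IntegrableOn (fun x => h x ^ 2 * exp (β * x)) (Ioi a) ∧
      ∫ x in Ioi a, h x ^ 2 * exp (β * x) ≤
        (∫ t in Ioi a, g t ^ 2 * exp (γ * t)) / γ * (exp (-(γ - β) * a) / (γ - β)) := by
  set C := ∫ t in Ioi a, g t ^ 2 * exp (γ * t)
  have hcont : ContinuousOn h (Ici a) := continuousOn_Ici_of_tendsto_atTop_zero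
    (integrableOn_Ioi_of_integrableOn_sq_mul_exp hγ hg hint) hFTC hlim
  refine integrableOn_Ioi_and_integral_le_of_norm_le_mul_exp (sub_pos.2 hβγ)
    ((((hcont.mono Ioi_subset_Ici_self).pow 2).mul (by fun_prop)).aestronglyMeasurable
      measurableSet_Ioi) fun x hx => ?_
  rw [norm_of_nonneg (by positivity)]
  calc h x ^ 2 * exp (β * x) ≤ C * (exp (-γ * x) / γ) * exp (β * x) := by
        gcongr
        exact sq_le_mul_exp_neg_of_tendsto_atTop_zero hγ hg hint hFTC hlim hx.out.le
    _ = C / γ * exp (-(γ - β) * x) := by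
        rw [show -(γ - β) * x = -γ * x + β * x by ring, exp_add]
        ring

end DecayAtInfinity

/-- If `γ > β > 0` and `h` lies in `H_γ` with weak derivative `g` and `h(∞) = 0`, then
`∫₀^∞ |h(x)|² e^{βx} dx ≤ (1/(γ(γ-β))) ∫₀^∞ |g(t)|² e^{γt} dt`; in particular
`h ∈ L²([0,∞), e^{βx}dx)` with `‖h‖_{L²_β} ≤ (1/√(γ(γ-β))) ‖h‖_γ`. -/
theorem embedding_Hgamma_L2beta
    (β γ : ℝ) (hβ : 0 < β) (hβγ : β < γ) (h g : ℝ → ℝ)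
    (hg_meas : Measurable g)
    (hg_int : IntegrableOn (fun t => g t ^ 2 * Real.exp (γ * t)) (Set.Ioi 0))
    (hFTC : ∀ x ≥ (0 : ℝ), h x = h 0 + ∫ t in (0:ℝ)..x, g t)
    (hlim : Tendsto h atTop (nhds 0)) :
    IntegrableOn (fun x => h x ^ 2 * Real.exp (β * x)) (Set.Ioi 0) ∧
      (∫ x in Set.Ioi (0:ℝ), h x ^ 2 * Real.exp (β * x))
        ≤ (1 / (γ * (γ - β))) * ∫ t in Set.Ioi (0:ℝ), g t ^ 2 * Real.exp (γ * t) ∧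
      Real.sqrt (∫ x in Set.Ioi (0:ℝ), h x ^ 2 * Real.exp (β * x))
        ≤ (1 / Real.sqrt (γ * (γ - β))) *
            Real.sqrt (|h 0| ^ 2 + ∫ t in Set.Ioi (0:ℝ), g t ^ 2 * Real.exp (γ * t)) := by
  have hγ : 0 < γ := hβ.trans hβγ
  obtain ⟨hInt, hle⟩ := integral_sq_mul_exp_Ioi_le_of_tendsto_atTop_zero hγ hβγ
    hg_meas.aestronglyMeasurable hg_int hFTC hlim
  set C := ∫ t in Ioi (0:ℝ), g t ^ 2 * exp (γ * t)
  have hle' : ∫ x in Ioi (0:ℝ), h x ^ 2 * exp (β * x) ≤ 1 / (γ * (γ - β)) * C := by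
    convert hle using 1
    rw [mul_zero, exp_zero]
    field_simp
  refine ⟨hInt, hle', ?_⟩
  calc √(∫ x in Ioi (0:ℝ), h x ^ 2 * exp (β * x))
      ≤ √(1 / (γ * (γ - β)) * (|h 0| ^ 2 + C)) :=
        sqrt_le_sqrt (hle'.trans (by gcongr; exact le_add_of_nonneg_left (sq_nonneg _)))
    _ = 1 / √(γ * (γ - β)) * √(|h 0| ^ 2 + C) := by
        rw [sqrt_mul (by positivity), one_div, sqrt_inv, ← one_div]
end

section
/- Let γ > β > 0 and set δ = (β+γ)/2. For every h lying in H_γ with weak derivative g and with h(∞) := lim_{x→∞} h(x) = 0, one has ∫₀^∞ |h(x)| e^{(β/2)x} dx ≤ (1/√((δ−β) δ (γ−δ))) ‖h‖_γ. In particular the function x ↦ h(x) e^{(β/2)x} is integrable on [0,∞) and its even reflection x ↦ h(|x|) e^{(β/2)|x|} belongs to L¹(ℝ) with L¹-norm at most (2/√((δ−β) δ (γ−δ))) ‖h‖_γ. -/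
/-!
Since `h(∞) = 0`, `h(x) = -∫ₓ^∞ g`, and Cauchy–Schwarz against the weight `e^{γt}` (in the form
of Young's inequality `|g| ≤ (s g² e^{γt} + e^{-γt}/s)/2`, optimised over the scale `s`) gives
`|h(x)| ≤ √(I/γ) e^{-γx/2}` with `I = ∫₀^∞ g² e^{γt}`. So `|h(x)| e^{βx/2}` is dominated by an
exponential of rate `(γ-β)/2`, with integral `2/(γ-β) · √(I/γ)`; since `δ - β = γ - δ = (γ-β)/2`
and `δ ≤ γ`, this is at most the stated constant times `‖h‖_γ`. The even reflection doubles the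
integral.
-/

open MeasureTheory Real Filter Set

lemma abs_le_half_mul_sq_mul_add_inv_div {w s : ℝ} (hw : 0 < w) (hs : 0 < s) (a : ℝ) :
    |a| ≤ (s * (a ^ 2 * w) + w⁻¹ / s) / 2 := by
  have hsw : 0 < s * w := mul_pos hs hw
  have key : 2 * |a| * (s * w) ≤ (s * w) ^ 2 * a ^ 2 + 1 := by
    nlinarith [sq_nonneg (s * w * |a| - 1), sq_abs a]
  have hrw : s * (a ^ 2 * w) + w⁻¹ / s = ((s * w) ^ 2 * a ^ 2 + 1) / (s * w) := by
    field_simp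
  rw [hrw, le_div_iff₀ two_pos, le_div_iff₀ hsw]
  linarith

lemma le_sqrt_mul_of_forall_le {X A B : ℝ} (hA : 0 ≤ A) (hB : 0 < B)
    (h : ∀ s > 0, X ≤ (s * A + B / s) / 2) : X ≤ √(A * B) := by
  rcases hA.eq_or_lt with rfl | hA
  · by_contra! hX
    rw [zero_mul, sqrt_zero] at hX
    have := h (2 * B / X) (by positivity)
    field_simp at this
    nlinarith
  · have hs : 0 < √B / √A := by positivity
    refine (h _ hs).trans_eq ?_
    rw [sqrt_mul hA.le]
    field_simp
    rw [sq_sqrt hA.le, sq_sqrt hB.le]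
    ring

section Primitive

variable {a : ℝ} {g h : ℝ → ℝ}

lemma continuousOn_primitive_Ici (hg : IntegrableOn g (Ioi a)) :
    ContinuousOn (fun x => ∫ t in a..x, g t) (Ici a) := by
  refine ((hg.integrable_indicator measurableSet_Ioi).continuous_primitive a).continuousOn.congr
    fun x hx => ?_
  simp only [intervalIntegral.integral_of_le hx, setIntegral_indicator measurableSet_Ioi,
    Ioc_inter_Ioi, max_self]

lemma eq_neg_integral_Ioi_of_tendsto_zero (hg : IntegrableOn g (Ioi a))
    (hFTC : ∀ x ≥ a, h x = h a + ∫ t in a..x, g t) (hlim : Tendsto h atTop (nhds 0))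
    {x : ℝ} (hx : a ≤ x) : h x = -∫ t in Ioi x, g t := by
  have hgx : IntegrableOn g (Ioi x) := hg.mono_set (Ioi_subset_Ioi hx)
  have hg_interval : ∀ {u v}, a ≤ u → u ≤ v → IntervalIntegrable g volume u v := fun hu huv =>
    (intervalIntegrable_iff_integrableOn_Ioc_of_le huv).mpr
      (hg.mono_set (Ioc_subset_Ioi_self.trans (Ioi_subset_Ioi hu)))
  have hinterval : ∀ y ≥ x, h y = h x + ∫ t in x..y, g t := fun y hy => by
    rw [hFTC y (hx.trans hy), hFTC x hx, add_assoc,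
      intervalIntegral.integral_add_adjacent_intervals (hg_interval le_rfl hx) (hg_interval hx hy)]
  have hlim' : Tendsto h atTop (nhds (h x + ∫ t in Ioi x, g t)) :=
    (tendsto_const_nhds.add (intervalIntegral_tendsto_integral_Ioi x hgx tendsto_id)).congr'
      (eventually_ge_atTop x |>.mono fun y hy => (hinterval y hy).symm)
  linarith [tendsto_nhds_unique hlim hlim']

end Primitive

section WeightedL2

variable {γ a : ℝ} {g h : ℝ → ℝ}

lemma integrableOn_Ioi_of_sq_mul_exp (hγ : 0 < γ)
    (hg : AEStronglyMeasurable g (volume.restrict (Ioi a)))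
    (hg2 : IntegrableOn (fun t => g t ^ 2 * exp (γ * t)) (Ioi a)) :
    IntegrableOn g (Ioi a) := by
  refine Integrable.mono' ((hg2.add (integrableOn_exp_mul_Ioi (neg_neg_of_pos hγ) a)).div_const 2)
    hg (ae_of_all _ fun t => ?_)
  simpa [← exp_neg] using abs_le_half_mul_sq_mul_add_inv_div (exp_pos (γ * t)) one_pos (g t)

lemma integral_abs_le_of_sq_mul_exp (hγ : 0 < γ)
    (hg : AEStronglyMeasurable g (volume.restrict (Ioi a)))
    (hg2 : IntegrableOn (fun t => g t ^ 2 * exp (γ * t)) (Ioi a)) :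
    ∫ t in Ioi a, |g t| ≤
      √((∫ t in Ioi a, g t ^ 2 * exp (γ * t)) / γ) * exp (-(γ / 2) * a) := by
  have hexp := integrableOn_exp_mul_Ioi (neg_neg_of_pos hγ) a
  have hyoung : ∀ s > 0, ∫ t in Ioi a, |g t| ≤
      (s * (∫ t in Ioi a, g t ^ 2 * exp (γ * t)) + (exp (-γ * a) / γ) / s) / 2 := by
    intro s hs
    have hmaj : IntegrableOn (fun t => (s * (g t ^ 2 * exp (γ * t)) + exp (-γ * t) / s) / 2)
        (Ioi a) := ((hg2.const_mul s).add (hexp.div_const s)).div_const 2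
    calc ∫ t in Ioi a, |g t|
        ≤ ∫ t in Ioi a, (s * (g t ^ 2 * exp (γ * t)) + exp (-γ * t) / s) / 2 :=
          setIntegral_mono_on (integrableOn_Ioi_of_sq_mul_exp hγ hg hg2).abs hmaj
            measurableSet_Ioi fun t _ => by
              simpa [← exp_neg] using abs_le_half_mul_sq_mul_add_inv_div (exp_pos (γ * t)) hs (g t)
      _ = _ := by
          rw [integral_div, integral_add (hg2.const_mul s) (hexp.div_const s), integral_const_mul,
            integral_div, integral_exp_mul_Ioi (neg_neg_of_pos hγ)]
          ring
  have hJ : 0 ≤ ∫ t in Ioi a, g t ^ 2 * exp (γ * t) :=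
    setIntegral_nonneg measurableSet_Ioi fun t _ => by positivity
  refine (le_sqrt_mul_of_forall_le hJ (by positivity) hyoung).trans_eq ?_
  rw [mul_div, mul_div_right_comm, sqrt_mul (div_nonneg hJ hγ.le), ← exp_half]
  ring_nf

lemma abs_le_sqrt_div_mul_exp_of_tendsto_zero (hγ : 0 < γ)
    (hg : AEStronglyMeasurable g (volume.restrict (Ioi a)))
    (hg2 : IntegrableOn (fun t => g t ^ 2 * exp (γ * t)) (Ioi a))
    (hFTC : ∀ x ≥ a, h x = h a + ∫ t in a..x, g t) (hlim : Tendsto h atTop (nhds 0))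
    {x : ℝ} (hx : a ≤ x) :
    |h x| ≤ √((∫ t in Ioi a, g t ^ 2 * exp (γ * t)) / γ) * exp (-(γ / 2) * x) := by
  have hsub : Ioi x ⊆ Ioi a := Ioi_subset_Ioi hx
  rw [eq_neg_integral_Ioi_of_tendsto_zero (integrableOn_Ioi_of_sq_mul_exp hγ hg hg2) hFTC hlim hx,
    abs_neg]
  calc |∫ t in Ioi x, g t| ≤ ∫ t in Ioi x, |g t| := abs_integral_le_integral_abs
    _ ≤ √((∫ t in Ioi x, g t ^ 2 * exp (γ * t)) / γ) * exp (-(γ / 2) * x) :=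
        integral_abs_le_of_sq_mul_exp hγ (hg.mono_set hsub) (hg2.mono_set hsub)
    _ ≤ √((∫ t in Ioi a, g t ^ 2 * exp (γ * t)) / γ) * exp (-(γ / 2) * x) := by
        have := setIntegral_mono_set hg2 (ae_of_all _ fun t => by positivity) hsub.eventuallyLE
        gcongr

end WeightedL2

section ExpDecay

variable {a c C : ℝ} {f : ℝ → ℝ}

lemma integrableOn_Ioi_of_abs_le_exp (hc : 0 < c)
    (hf : AEStronglyMeasurable f (volume.restrict (Ioi a)))
    (hbound : ∀ x ∈ Ioi a, |f x| ≤ C * exp (-c * x)) : IntegrableOn f (Ioi a) :=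
  Integrable.mono' ((integrableOn_exp_mul_Ioi (neg_neg_of_pos hc) a).const_mul C) hf
    ((ae_restrict_iff' measurableSet_Ioi).mpr (ae_of_all _ hbound))

lemma integral_abs_le_of_abs_le_exp (hc : 0 < c)
    (hf : AEStronglyMeasurable f (volume.restrict (Ioi a)))
    (hbound : ∀ x ∈ Ioi a, |f x| ≤ C * exp (-c * x)) :
    ∫ x in Ioi a, |f x| ≤ C * exp (-c * a) / c := by
  calc ∫ x in Ioi a, |f x| ≤ ∫ x in Ioi a, C * exp (-c * x) :=
        setIntegral_mono_on (integrableOn_Ioi_of_abs_le_exp hc hf hbound).abs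
          ((integrableOn_exp_mul_Ioi (neg_neg_of_pos hc) a).const_mul C) measurableSet_Ioi hbound
    _ = C * exp (-c * a) / c := by
        rw [integral_const_mul, integral_exp_mul_Ioi (neg_neg_of_pos hc)]
        field_simp

end ExpDecay

lemma MeasureTheory.IntegrableOn.integrable_comp_abs {f : ℝ → ℝ} (hf : IntegrableOn f (Ioi 0)) :
    Integrable fun x => f |x| := by
  have hIoi : IntegrableOn (fun x => f |x|) (Ioi 0) :=
    hf.congr_fun (fun x hx => by rw [abs_of_pos hx]) measurableSet_Ioi
  have hIoi' : IntegrableOn (fun x => f |x|) (Ioi (-0)) := by rwa [neg_zero]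
  have hIic : IntegrableOn (fun x => f |x|) (Iic 0) := by
    rw [integrableOn_Iic_iff_integrableOn_Iio]
    simpa only [abs_neg] using hIoi'.comp_neg_Iio
  simpa using hIic.union hIoi

lemma sqrt_div_mul_two_div_le {β γ δ I N : ℝ} (hβ : 0 < β) (hβγ : β < γ) (hδ : δ = (β + γ) / 2)
    (hI : 0 ≤ I) (hIN : I ≤ N) :
    √(I / γ) * (2 / (γ - β)) ≤ 1 / √((δ - β) * δ * (γ - δ)) * √N := by
  have hδpos : 0 < δ := by rw [hδ]; linarith
  have hprod : √((δ - β) * δ * (γ - δ)) = (γ - β) / 2 * √δ := by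
    rw [show (δ - β) * δ * (γ - δ) = ((γ - β) / 2) ^ 2 * δ by rw [hδ]; ring,
      sqrt_mul (sq_nonneg _), sqrt_sq (by linarith)]
  rw [hprod, sqrt_div hI]
  have : √I * √δ ≤ √N * √γ :=
    mul_le_mul (sqrt_le_sqrt hIN) (sqrt_le_sqrt (by rw [hδ]; linarith)) (sqrt_nonneg _)
      (sqrt_nonneg _)
  have hγ : 0 < √γ := sqrt_pos.mpr (hβ.trans hβγ)
  have hδ' : 0 < √δ := sqrt_pos.mpr hδpos
  have hγβ : 0 < γ - β := by linarith
  rw [div_mul_div_comm, one_div, ← div_eq_inv_mul, div_le_div_iff₀ (by positivity) (by positivity)]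
  nlinarith

/-- If `γ > β > 0`, `δ = (β+γ)/2`, and `h` lies in `H_γ` with weak derivative `g` and
`h(∞) = 0`, then `x ↦ h(x)e^{(β/2)x}` is integrable on `[0,∞)` with
`∫₀^∞ |h(x)| e^{(β/2)x} dx ≤ (1/√((δ-β)δ(γ-δ))) ‖h‖_γ`, and its even reflection lies in
`L¹(ℝ)` with norm at most `(2/√((δ-β)δ(γ-δ))) ‖h‖_γ`. -/
theorem L1_bound_reflection
    (β γ δ : ℝ) (hβ : 0 < β) (hβγ : β < γ) (hδ : δ = (β + γ) / 2)
    (h g : ℝ → ℝ)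
    (hg_meas : Measurable g)
    (hg_int : IntegrableOn (fun t => g t ^ 2 * Real.exp (γ * t)) (Set.Ioi 0))
    (hFTC : ∀ x ≥ (0 : ℝ), h x = h 0 + ∫ t in (0:ℝ)..x, g t)
    (hlim : Tendsto h atTop (nhds 0)) :
    IntegrableOn (fun x => |h x| * Real.exp (β / 2 * x)) (Set.Ioi 0) ∧
      (∫ x in Set.Ioi (0:ℝ), |h x| * Real.exp (β / 2 * x))
        ≤ (1 / Real.sqrt ((δ - β) * δ * (γ - δ))) *
            Real.sqrt (|h 0| ^ 2 + ∫ t in Set.Ioi (0:ℝ), g t ^ 2 * Real.exp (γ * t)) ∧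
      Integrable (fun x : ℝ => h |x| * Real.exp (β / 2 * |x|)) ∧
      (∫ x : ℝ, |h |x| * Real.exp (β / 2 * |x|)|)
        ≤ (2 / Real.sqrt ((δ - β) * δ * (γ - δ))) *
            Real.sqrt (|h 0| ^ 2 + ∫ t in Set.Ioi (0:ℝ), g t ^ 2 * Real.exp (γ * t)) := by
  have hγ : 0 < γ := hβ.trans hβγ
  have hc : 0 < (γ - β) / 2 := by linarith
  have hgm : AEStronglyMeasurable g (volume.restrict (Ioi 0)) := hg_meas.aestronglyMeasurable
  set F := fun x => h x * exp (β / 2 * x)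
  have habsF : ∀ x, |F x| = |h x| * exp (β / 2 * x) := fun x => by rw [abs_mul, abs_exp]
  have hI : 0 ≤ ∫ t in Ioi 0, g t ^ 2 * exp (γ * t) :=
    setIntegral_nonneg measurableSet_Ioi fun t _ => by positivity
  have hcont : ContinuousOn h (Ici 0) :=
    (continuousOn_const.add (continuousOn_primitive_Ici
      (integrableOn_Ioi_of_sq_mul_exp hγ hgm hg_int))).congr hFTC
  have hFm : AEStronglyMeasurable F (volume.restrict (Ioi 0)) :=
    ((hcont.mono Ioi_subset_Ici_self).mul (by fun_prop)).aestronglyMeasurable measurableSet_Ioi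
  have hFbound : ∀ x ∈ Ioi 0, |F x| ≤
      √((∫ t in Ioi 0, g t ^ 2 * exp (γ * t)) / γ) * exp (-((γ - β) / 2) * x) := fun x hx => by
    rw [habsF, show -((γ - β) / 2) * x = -(γ / 2) * x + β / 2 * x by ring, exp_add, ← mul_assoc]
    gcongr
    exact abs_le_sqrt_div_mul_exp_of_tendsto_zero hγ hgm hg_int hFTC hlim (le_of_lt hx)
  have hFint : IntegrableOn F (Ioi 0) := integrableOn_Ioi_of_abs_le_exp hc hFm hFbound
  have hFle : ∫ x in Ioi 0, |F x| ≤ (1 / √((δ - β) * δ * (γ - δ))) *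
      √(|h 0| ^ 2 + ∫ t in Ioi 0, g t ^ 2 * exp (γ * t)) := calc
    _ ≤ √((∫ t in Ioi 0, g t ^ 2 * exp (γ * t)) / γ) * exp (-((γ - β) / 2) * 0) / ((γ - β) / 2) :=
        integral_abs_le_of_abs_le_exp hc hFm hFbound
    _ = √((∫ t in Ioi 0, g t ^ 2 * exp (γ * t)) / γ) * (2 / (γ - β)) := by
        rw [mul_zero, exp_zero, mul_one]
        field_simp
    _ ≤ _ := sqrt_div_mul_two_div_le hβ hβγ hδ hI (le_add_of_nonneg_left (sq_nonneg _))
  refine ⟨by simpa only [IntegrableOn, habsF] using hFint.abs, by simpa only [habsF] using hFle,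
    hFint.integrable_comp_abs, ?_⟩
  rw [integral_comp_abs (f := fun y => |F y|)]
  calc 2 * ∫ x in Ioi 0, |F x| ≤ 2 * ((1 / √((δ - β) * δ * (γ - δ))) *
        √(|h 0| ^ 2 + ∫ t in Ioi 0, g t ^ 2 * exp (γ * t))) := by gcongr
    _ = _ := by ring
end

section
/- Let γ > β > 0, let M > 0, and let (h_j)_{j∈ℕ} be a sequence of functions, each lying in H_γ with weak derivative g_j and with h_j(∞) := lim_{x→∞} h_j(x) = 0, such that ‖h_j‖_γ ≤ M for all j. Then there exist a subsequence (h_{j_k}) and a function φ ∈ L²([0,∞), e^{βx} dx) such that ∫₀^∞ |h_{j_k}(x) − φ(x)|² e^{βx} dx → 0 as k → ∞. In other words, the embedding H⁰_γ ⊂ L²_β is compact. -/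
/-!
A bound on the `H_γ`-norm controls `∫ |g|` over any set through
`2|g| ≤ a g² e^{γt} + a⁻¹ e^{-γt}` (Cauchy–Schwarz with weight `e^{γt}`). This makes the sequence
uniformly Hölder-`1/2` continuous and gives it the common envelope `|h_j(x)| ≤ B e^{-γx/2}`.
A diagonal extraction over a countable dense set, upgraded by equicontinuity, yields a pointwise
convergent subsequence, and since `β < γ` the envelope `B² e^{-(γ-β)x}` is integrable, so dominated
convergence gives convergence in `L²_β`.
-/

open MeasureTheory Real Filter Set Topology

lemma two_mul_abs_le_mul_sq_add_inv (z : ℝ) {c : ℝ} (hc : 0 < c) : 2 * |z| ≤ c * z ^ 2 + c⁻¹ := by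
  have hcc : c * c⁻¹ = 1 := mul_inv_cancel₀ hc.ne'
  rw [← sq_abs z]
  nlinarith [sq_nonneg (c * |z| - 1), inv_pos.mpr hc]

lemma abs_le_sq_mul_exp_add_exp (z γ t : ℝ) {a : ℝ} (ha : 0 < a) :
    |z| ≤ (a * (z ^ 2 * exp (γ * t)) + a⁻¹ * exp (-γ * t)) / 2 := by
  have h := two_mul_abs_le_mul_sq_add_inv z (mul_pos ha (exp_pos (γ * t)))
  rw [mul_inv, ← exp_neg, ← neg_mul] at h
  linarith

section WeightedL1

variable {μ : Measure ℝ} {γ : ℝ} {g : ℝ → ℝ}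

lemma integrable_of_sq_mul_exp (hg : AEStronglyMeasurable g μ)
    (hgγ : Integrable (fun t => g t ^ 2 * exp (γ * t)) μ)
    (hexp : Integrable (fun t => exp (-γ * t)) μ) : Integrable g μ :=
  ((hgγ.const_mul 1).add (hexp.const_mul 1⁻¹)).div_const 2 |>.mono' hg <|
    .of_forall fun t => abs_le_sq_mul_exp_add_exp (g t) γ t one_pos

lemma integral_abs_le_of_sq_mul_exp_s11 (hg : AEStronglyMeasurable g μ)
    (hgγ : Integrable (fun t => g t ^ 2 * exp (γ * t)) μ)
    (hexp : Integrable (fun t => exp (-γ * t)) μ) {a : ℝ} (ha : 0 < a) :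
    ∫ t, |g t| ∂μ ≤ (a * ∫ t, g t ^ 2 * exp (γ * t) ∂μ + a⁻¹ * ∫ t, exp (-γ * t) ∂μ) / 2 := by
  rw [← integral_const_mul, ← integral_const_mul, ← integral_add (hgγ.const_mul a)
    (hexp.const_mul a⁻¹), ← integral_div]
  exact integral_mono (integrable_of_sq_mul_exp hg hgγ hexp).abs
    (((hgγ.const_mul a).add (hexp.const_mul a⁻¹)).div_const 2)
    fun t => abs_le_sq_mul_exp_add_exp (g t) γ t ha

end WeightedL1

theorem Equicontinuous.exists_subseq_tendsto {X α : Type*} [TopologicalSpace X]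
    [TopologicalSpace.SeparableSpace X] [PseudoMetricSpace α] [CompleteSpace α]
    {F : ℕ → X → α} (hF : Equicontinuous F) {K : X → Set α} (hK : ∀ x, IsCompact (K x))
    (hFK : ∀ n x, F n x ∈ K x) :
    ∃ φ : ℕ → ℕ, StrictMono φ ∧ ∃ f : X → α, Tendsto (F ∘ φ) atTop (𝓝 f) := by
  obtain ⟨D, hD_countable, hD_dense⟩ := TopologicalSpace.exists_countable_dense X
  have : Countable D := hD_countable.to_subtype
  obtain ⟨_, -, φ, hφ, hφD⟩ := (isCompact_univ_pi fun d : D => hK d).tendsto_subseq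
    (x := fun n (d : D) => F n d) fun n d _ => hFK n d
  have hcauchy (x : X) : CauchySeq fun n => F (φ n) x := by
    refine Metric.cauchySeq_iff.mpr fun ε hε => ?_
    obtain ⟨d, hdD, hxd⟩ := hD_dense.inter_nhds_nonempty
      (Metric.equicontinuousAt_iff_right.mp (hF x) (ε / 3) (by positivity))
    obtain ⟨N, hN⟩ := Metric.cauchySeq_iff.mp
      (tendsto_pi_nhds.mp hφD ⟨d, hdD⟩).cauchySeq (ε / 3) (by positivity)
    refine ⟨N, fun m hm n hn => ?_⟩
    calc dist (F (φ m) x) (F (φ n) x)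
        ≤ dist (F (φ m) x) (F (φ m) d) + dist (F (φ m) d) (F (φ n) d)
          + dist (F (φ n) d) (F (φ n) x) := dist_triangle4 _ _ _ _
      _ < ε / 3 + ε / 3 + ε / 3 := by
        gcongr
        · exact hxd _
        · exact hN m hm n hn
        · exact dist_comm (F (φ n) x) _ ▸ hxd _
      _ = ε := by ring
  choose f hf using fun x => cauchySeq_tendsto_of_complete (hcauchy x)
  exact ⟨φ, hφ, f, tendsto_pi_nhds.mpr hf⟩

/-- `h ∈ H_γ` with weak derivative `g`; the values of `h` on `(-∞, 0)` play no role. -/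
structure HasHγDeriv (γ : ℝ) (h g : ℝ → ℝ) : Prop where
  measurable : Measurable g
  integrableOn_sq_mul_exp : IntegrableOn (fun t => g t ^ 2 * exp (γ * t)) (Ioi 0)
  eq_add_integral : ∀ x ≥ 0, h x = h 0 + ∫ t in (0 : ℝ)..x, g t

namespace HasHγDeriv

variable {γ C x y : ℝ} {h g : ℝ → ℝ} {s : Set ℝ}

lemma integrableOn (hh : HasHγDeriv γ h g) (hγ : 0 < γ) (hs : s ⊆ Ioi 0) :
    IntegrableOn g s :=
  integrable_of_sq_mul_exp hh.measurable.aestronglyMeasurable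
    (hh.integrableOn_sq_mul_exp.mono_set hs) ((exp_neg_integrableOn_Ioi 0 hγ).mono_set hs)

lemma setIntegral_abs_le (hh : HasHγDeriv γ h g) (hγ : 0 < γ)
    (hC : ∫ t in Ioi 0, g t ^ 2 * exp (γ * t) ≤ C) (hs : s ⊆ Ioi 0) {a : ℝ} (ha : 0 < a) :
    ∫ t in s, |g t| ≤ (a * C + a⁻¹ * ∫ t in s, exp (-γ * t)) / 2 := by
  have hgs : ∫ t in s, g t ^ 2 * exp (γ * t) ≤ C :=
    (setIntegral_mono_set hh.integrableOn_sq_mul_exp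
      (ae_of_all _ fun t => by positivity) hs.eventuallyLE).trans hC
  calc ∫ t in s, |g t|
      ≤ (a * (∫ t in s, g t ^ 2 * exp (γ * t)) + a⁻¹ * ∫ t in s, exp (-γ * t)) / 2 :=
        integral_abs_le_of_sq_mul_exp_s11 hh.measurable.aestronglyMeasurable
          (hh.integrableOn_sq_mul_exp.mono_set hs) ((exp_neg_integrableOn_Ioi 0 hγ).mono_set hs) ha
    _ ≤ (a * C + a⁻¹ * ∫ t in s, exp (-γ * t)) / 2 := by gcongr

lemma sub_eq_intervalIntegral (hh : HasHγDeriv γ h g) (hγ : 0 < γ) (hx : 0 ≤ x) (hy : 0 ≤ y) :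
    h y - h x = ∫ t in x..y, g t := by
  have hint {z : ℝ} (hz : 0 ≤ z) : IntervalIntegrable g volume 0 z :=
    (intervalIntegrable_iff_integrableOn_Ioc_of_le hz).mpr (hh.integrableOn hγ Ioc_subset_Ioi_self)
  rw [hh.eq_add_integral y hy, hh.eq_add_integral x hx, add_sub_add_left_eq_sub,
    intervalIntegral.integral_interval_sub_left (hint hy) (hint hx)]

lemma eq_neg_setIntegral_Ioi (hh : HasHγDeriv γ h g) (hγ : 0 < γ) (hlim : Tendsto h atTop (𝓝 0))
    (hx : 0 ≤ x) : h x = -∫ t in Ioi x, g t := by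
  have hIoi : Tendsto (fun y => h y - h x) atTop (𝓝 (∫ t in Ioi x, g t)) :=
    (intervalIntegral_tendsto_integral_Ioi x (hh.integrableOn hγ (Ioi_subset_Ioi hx))
      tendsto_id).congr' <| (eventually_ge_atTop x).mono fun y hy =>
        (hh.sub_eq_intervalIntegral hγ hx (hx.trans hy)).symm
  linarith [tendsto_nhds_unique hIoi (hlim.sub_const (h x))]

lemma abs_sub_le_sqrt (hh : HasHγDeriv γ h g) (hγ : 0 < γ)
    (hC : ∫ t in Ioi 0, g t ^ 2 * exp (γ * t) ≤ C) (hx : 0 ≤ x) (hy : 0 ≤ y) :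
    |h y - h x| ≤ (C + 1) / 2 * √|y - x| := by
  wlog hxy : x < y generalizing x y
  · rcases (not_lt.mp hxy).eq_or_lt with rfl | hyx
    · simp
    · rw [abs_sub_comm, abs_sub_comm y]
      exact this hy hx hyx
  have hsub : Ioc x y ⊆ Ioi 0 := fun t ht => hx.trans_lt ht.1
  have hexp : ∫ t in Ioc x y, exp (-γ * t) ≤ y - x := by
    have hle_one : ∀ t ∈ Ioc x y, ‖exp (-γ * t)‖ ≤ 1 := fun t ht => by
      rw [norm_of_nonneg (exp_pos _).le, exp_le_one_iff]
      nlinarith [mem_Ioi.mp (hsub ht)]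
    have := norm_setIntegral_le_of_norm_le_const (μ := volume) measure_Ioc_lt_top hle_one
    rw [one_mul, volume_real_Ioc_of_le hxy.le, norm_eq_abs] at this
    exact (le_abs_self _).trans this
  have hd : 0 < √(y - x) := sqrt_pos.mpr (sub_pos.mpr hxy)
  rw [hh.sub_eq_intervalIntegral hγ hx hy, intervalIntegral.integral_of_le hxy.le,
    abs_of_pos (sub_pos.mpr hxy)]
  calc |∫ t in Ioc x y, g t| ≤ ∫ t in Ioc x y, |g t| := abs_integral_le_integral_abs
    _ ≤ (√(y - x) * C + (√(y - x))⁻¹ * ∫ t in Ioc x y, exp (-γ * t)) / 2 :=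
      hh.setIntegral_abs_le hγ hC hsub hd
    _ ≤ (√(y - x) * C + (√(y - x))⁻¹ * (y - x)) / 2 := by gcongr
    _ = (C + 1) / 2 * √(y - x) := by
      field_simp
      rw [sq_sqrt (sub_pos.mpr hxy).le]
      ring

lemma abs_le_mul_exp (hh : HasHγDeriv γ h g) (hγ : 0 < γ)
    (hC : ∫ t in Ioi 0, g t ^ 2 * exp (γ * t) ≤ C) (hlim : Tendsto h atTop (𝓝 0)) (hx : 0 ≤ x) :
    |h x| ≤ (C + γ⁻¹) / 2 * exp (-γ * x / 2) := by
  have hsq : exp (-γ * x) = exp (-γ * x / 2) * exp (-γ * x / 2) := by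
    rw [← exp_add]; ring_nf
  rw [hh.eq_neg_setIntegral_Ioi hγ hlim hx, abs_neg]
  calc |∫ t in Ioi x, g t| ≤ ∫ t in Ioi x, |g t| := abs_integral_le_integral_abs
    _ ≤ (exp (-γ * x / 2) * C + (exp (-γ * x / 2))⁻¹ * ∫ t in Ioi x, exp (-γ * t)) / 2 :=
      hh.setIntegral_abs_le hγ hC (Ioi_subset_Ioi hx) (exp_pos _)
    _ = (C + γ⁻¹) / 2 * exp (-γ * x / 2) := by
      rw [integral_exp_mul_Ioi (neg_lt_zero.mpr hγ), hsq]
      field_simp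

lemma equicontinuous_comp_max {ι : Type*} {h g : ι → ℝ → ℝ} (hh : ∀ i, HasHγDeriv γ (h i) (g i))
    (hγ : 0 < γ) (hC : ∀ i, ∫ t in Ioi 0, g i t ^ 2 * exp (γ * t) ≤ C) :
    Equicontinuous fun i x => h i (max x 0) := by
  refine Metric.equicontinuous_of_continuity_modulus (fun δ => (C + 1) / 2 * √δ)
    (by simpa using (continuous_sqrt.tendsto 0).const_mul ((C + 1) / 2)) _ fun x y i => ?_
  rw [dist_comm, Real.dist_eq, Real.dist_eq]
  have hmax : |max y 0 - max x 0| ≤ |x - y| :=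
    (abs_max_sub_max_le_abs y x 0).trans_eq (abs_sub_comm y x)
  have hC0 : 0 ≤ C := (setIntegral_nonneg measurableSet_Ioi fun t _ => by positivity).trans (hC i)
  exact ((hh i).abs_sub_le_sqrt hγ (hC i) (le_max_right x 0) (le_max_right y 0)).trans <|
    mul_le_mul_of_nonneg_left (sqrt_le_sqrt hmax) (by positivity)

end HasHγDeriv

section Decay

variable {β γ B : ℝ}

lemma sq_mul_exp_le_of_abs_le {u x : ℝ} (hu : |u| ≤ B * exp (-γ * x / 2)) :
    u ^ 2 * exp (β * x) ≤ B ^ 2 * exp (-(γ - β) * x) := by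
  have hsq : u ^ 2 ≤ (B * exp (-γ * x / 2)) ^ 2 := sq_abs u ▸ pow_le_pow_left₀ (abs_nonneg u) hu 2
  calc u ^ 2 * exp (β * x) ≤ (B * exp (-γ * x / 2)) ^ 2 * exp (β * x) := by gcongr
    _ = B ^ 2 * exp (-(γ - β) * x) := by
      rw [mul_pow, mul_assoc, ← exp_nat_mul, ← exp_add]
      ring_nf

lemma integrableOn_sq_mul_exp_of_abs_le (hβγ : β < γ) {f : ℝ → ℝ}
    (hf : AEStronglyMeasurable f (volume.restrict (Ioi 0)))
    (hfB : ∀ x > 0, |f x| ≤ B * exp (-γ * x / 2)) :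
    IntegrableOn (fun x => f x ^ 2 * exp (β * x)) (Ioi 0) := by
  refine ((exp_neg_integrableOn_Ioi 0 (sub_pos.mpr hβγ)).const_mul (B ^ 2)).mono'
    ((hf.pow 2).mul (by fun_prop)) ?_
  filter_upwards [ae_restrict_mem measurableSet_Ioi] with x hx
  rw [norm_of_nonneg (by positivity)]
  exact sq_mul_exp_le_of_abs_le (hfB x hx)

lemma tendsto_setIntegral_sq_sub_mul_exp (hβγ : β < γ) {F : ℕ → ℝ → ℝ} {f : ℝ → ℝ}
    (hF : ∀ n, AEStronglyMeasurable (F n) (volume.restrict (Ioi 0)))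
    (hf : AEStronglyMeasurable f (volume.restrict (Ioi 0)))
    (hFB : ∀ n, ∀ x > 0, |F n x| ≤ B * exp (-γ * x / 2))
    (hfB : ∀ x > 0, |f x| ≤ B * exp (-γ * x / 2))
    (hFf : ∀ x > 0, Tendsto (F · x) atTop (𝓝 (f x))) :
    Tendsto (fun n => ∫ x in Ioi 0, (F n x - f x) ^ 2 * exp (β * x)) atTop (𝓝 0) := by
  have hdiff (n : ℕ) (x : ℝ) (hx : 0 < x) : |F n x - f x| ≤ 2 * B * exp (-γ * x / 2) := by
    linarith [abs_sub (F n x) (f x), hFB n x hx, hfB x hx]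
  have hdom : Integrable (fun x => (2 * B) ^ 2 * exp (-(γ - β) * x)) (volume.restrict (Ioi 0)) :=
    (exp_neg_integrableOn_Ioi 0 (sub_pos.mpr hβγ)).const_mul _
  simpa using tendsto_integral_of_dominated_convergence
    (F := fun n x => (F n x - f x) ^ 2 * exp (β * x)) _
    (fun n => (((hF n).sub hf).pow 2).mul (by fun_prop)) hdom
    (fun n => (ae_restrict_mem measurableSet_Ioi).mono fun x hx => by
      rw [norm_of_nonneg (mul_nonneg (sq_nonneg _) (exp_pos _).le)]
      exact sq_mul_exp_le_of_abs_le (hdiff n x hx))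
    ((ae_restrict_mem measurableSet_Ioi).mono fun x hx =>
      (((hFf x hx).sub_const (f x)).pow 2).mul_const (exp (β * x)))

end Decay

theorem compact_embedding_H0gamma_L2beta_general
    (β γ M : ℝ) (hβ : 0 < β) (hβγ : β < γ)
    (h g : ℕ → ℝ → ℝ)
    (hg_meas : ∀ j, Measurable (g j))
    (hg_int : ∀ j, IntegrableOn (fun t => g j t ^ 2 * Real.exp (γ * t)) (Set.Ioi 0))
    (hFTC : ∀ j, ∀ x ≥ (0 : ℝ), h j x = h j 0 + ∫ t in (0:ℝ)..x, g j t)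
    (hlim : ∀ j, Tendsto (h j) atTop (nhds 0))
    (hbound : ∀ j,
      Real.sqrt (|h j 0| ^ 2 + ∫ t in Set.Ioi (0:ℝ), g j t ^ 2 * Real.exp (γ * t)) ≤ M) :
    ∃ k : ℕ → ℕ, StrictMono k ∧
      ∃ φ : ℝ → ℝ,
        IntegrableOn (fun x => φ x ^ 2 * Real.exp (β * x)) (Set.Ioi 0) ∧
        Tendsto (fun n => ∫ x in Set.Ioi (0:ℝ), (h (k n) x - φ x) ^ 2 * Real.exp (β * x))
          atTop (nhds 0) := by
  have hγ : 0 < γ := hβ.trans hβγ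
  have hH (j : ℕ) : HasHγDeriv γ (h j) (g j) := ⟨hg_meas j, hg_int j, hFTC j⟩
  have hC (j : ℕ) : ∫ t in Ioi 0, g j t ^ 2 * exp (γ * t) ≤ M ^ 2 :=
    (le_add_of_nonneg_left (sq_nonneg _)).trans (sqrt_le_iff.mp (hbound j)).2
  set B := (M ^ 2 + γ⁻¹) / 2
  have hdecay (j : ℕ) (x : ℝ) (hx : 0 ≤ x) : |h j x| ≤ B * exp (-γ * x / 2) :=
    (hH j).abs_le_mul_exp hγ (hC j) (hlim j) hx
  -- extending by `h j 0` on `(-∞, 0)` turns the family into an equicontinuous one on `ℝ`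
  set H : ℕ → ℝ → ℝ := fun j x => h j (max x 0)
  have hH_equi : Equicontinuous H := HasHγDeriv.equicontinuous_comp_max hH hγ hC
  have hH_mem (j : ℕ) (x : ℝ) : H j x ∈ Icc (-B) B := by
    have hexp : exp (-γ * max x 0 / 2) ≤ 1 := exp_le_one_iff.mpr (by nlinarith [le_max_right x 0])
    exact abs_le.mp ((hdecay j _ (le_max_right x 0)).trans
      (mul_le_of_le_one_right (by positivity) hexp))
  obtain ⟨k, hk, φ, hφ⟩ := hH_equi.exists_subseq_tendsto (fun _ => isCompact_Icc) hH_mem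
  have hφ_cont : Continuous φ := hφ.continuous_of_equicontinuous (hH_equi.comp k)
  have hconv (x : ℝ) (hx : 0 < x) : Tendsto (fun n => h (k n) x) atTop (𝓝 (φ x)) := by
    simpa [H, max_eq_left hx.le] using tendsto_pi_nhds.mp hφ x
  have hφ_decay (x : ℝ) (hx : 0 < x) : |φ x| ≤ B * exp (-γ * x / 2) :=
    le_of_tendsto' (hconv x hx).abs fun n => hdecay (k n) x hx.le
  have hmeas (n : ℕ) : AEStronglyMeasurable (h (k n)) (volume.restrict (Ioi 0)) :=
    (hH_equi.continuous (k n)).aestronglyMeasurable.congr <|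
      (ae_restrict_mem measurableSet_Ioi).mono fun x (hx : 0 < x) => by simp [H, max_eq_left hx.le]
  exact ⟨k, hk, φ, integrableOn_sq_mul_exp_of_abs_le hβγ hφ_cont.aestronglyMeasurable hφ_decay,
    tendsto_setIntegral_sq_sub_mul_exp hβγ hmeas hφ_cont.aestronglyMeasurable
      (fun n x hx => hdecay (k n) x hx.le) hφ_decay hconv⟩

/-- Compactness of the embedding `H⁰_γ ⊂ L²_β` for `γ > β > 0`: every sequence `(h_j)` in
`H⁰_γ` bounded in the `H_γ`-norm admits a subsequence converging in
`L²([0,∞), e^{βx}dx)` to some `φ`. -/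
theorem compact_embedding_H0gamma_L2beta
    (β γ M : ℝ) (hβ : 0 < β) (hβγ : β < γ) (hM : 0 < M)
    (h g : ℕ → ℝ → ℝ)
    (hg_meas : ∀ j, Measurable (g j))
    (hg_int : ∀ j, IntegrableOn (fun t => g j t ^ 2 * Real.exp (γ * t)) (Set.Ioi 0))
    (hFTC : ∀ j, ∀ x ≥ (0 : ℝ), h j x = h j 0 + ∫ t in (0:ℝ)..x, g j t)
    (hlim : ∀ j, Tendsto (h j) atTop (nhds 0))
    (hbound : ∀ j,
      Real.sqrt (|h j 0| ^ 2 + ∫ t in Set.Ioi (0:ℝ), g j t ^ 2 * Real.exp (γ * t)) ≤ M) :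
    ∃ k : ℕ → ℕ, StrictMono k ∧
      ∃ φ : ℝ → ℝ,
        IntegrableOn (fun x => φ x ^ 2 * Real.exp (β * x)) (Set.Ioi 0) ∧
        Tendsto (fun n => ∫ x in Set.Ioi (0:ℝ), (h (k n) x - φ x) ^ 2 * Real.exp (β * x))
          atTop (nhds 0) :=
  compact_embedding_H0gamma_L2beta_general β γ M hβ hβγ h g hg_meas hg_int hFTC hlim hbound
end
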